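/- arXiv:2203.13713 — 8 statements merged into one kernel-verified Lean document; each statement's English description precedes it below -/
import Mathlib

section
/- For every integer k ≥ 1, the function p_k is convex on the interval [0, 1/2]. -/
/-!
The sum `p k x` is the probability that a binomial variable with `2k - 1` trials and success
probability `x` is at least `k`. Differentiating term by term, the sum telescopes, leaving
`p (j + 1)' x = (2j + 1) * choose (2j) j * (x (1 - x)) ^ j`. Since `x (1 - x)` is nonnegative and
increasing on `[0, 1/2]`, this derivative is monotone there, hence `p k` is convex.
-/

def p (k : ℕ) (x : ℝ) : ℝ :=
  ∑ ℓ ∈ Finset.range k, (Nat.choose (2*k-1) ℓ : ℝ) * x^(2*k-1-ℓ) * (1-x)^ℓ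

theorem hasDerivAt_choose_mul_pow_mul_one_sub_pow (N m : ℕ) (x : ℝ) :
    HasDerivAt (fun x : ℝ => ((N + 1).choose (m + 1) : ℝ) * x ^ (N - m) * (1 - x) ^ (m + 1))
      ((N + 1) * (N.choose (m + 1) * x ^ (N - (m + 1)) * (1 - x) ^ (m + 1)
        - N.choose m * x ^ (N - m) * (1 - x) ^ m)) x := by
  have hlow : ((N + 1).choose (m + 1) : ℝ) * (m + 1) = (N + 1) * N.choose m := by
    exact_mod_cast (Nat.add_one_mul_choose_eq N m).symm
  have hhigh : ((N + 1).choose (m + 1) : ℝ) * (N - m : ℕ) = (N + 1) * N.choose (m + 1) := by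
    have := Nat.choose_mul_succ_eq N (m + 1)
    rw [Nat.add_sub_add_right] at this
    exact_mod_cast (this.symm.trans (mul_comm _ _))
  refine (((hasDerivAt_pow (N - m) x).const_mul ((N + 1).choose (m + 1) : ℝ)).fun_mul
    (((hasDerivAt_id x).const_sub 1).fun_pow (m + 1))).congr_deriv ?_
  rw [Nat.sub_sub]
  simp only [id, Nat.add_sub_cancel]
  push_cast
  linear_combination (x ^ (N - (m + 1)) * (1 - x) ^ (m + 1)) * hhigh
    - (x ^ (N - m) * (1 - x) ^ m) * hlow

theorem hasDerivAt_sum_choose_mul_pow_mul_one_sub_pow (N m : ℕ) (x : ℝ) :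
    HasDerivAt (fun x : ℝ =>
        ∑ ℓ ∈ Finset.range (m + 1), ((N + 1).choose ℓ : ℝ) * x ^ (N + 1 - ℓ) * (1 - x) ^ ℓ)
      ((N + 1) * (N.choose m * x ^ (N - m) * (1 - x) ^ m)) x := by
  induction m with
  | zero => simpa using hasDerivAt_pow (N + 1) x
  | succ m ih =>
    simp only [Finset.sum_range_succ (n := m + 1), Nat.add_sub_add_right]
    exact (ih.fun_add (hasDerivAt_choose_mul_pow_mul_one_sub_pow N m x)).congr_deriv (by ring)

theorem hasDerivAt_p_succ (j : ℕ) (x : ℝ) :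
    HasDerivAt (p (j + 1)) ((2 * j + 1) * (2 * j).choose j * (x * (1 - x)) ^ j) x := by
  have hp : p (j + 1) = fun x : ℝ => ∑ ℓ ∈ Finset.range (j + 1),
      ((2 * j + 1).choose ℓ : ℝ) * x ^ (2 * j + 1 - ℓ) * (1 - x) ^ ℓ := by
    funext x
    simp only [p, show 2 * (j + 1) - 1 = 2 * j + 1 by omega]
  rw [hp]
  refine (hasDerivAt_sum_choose_mul_pow_mul_one_sub_pow (2 * j) j x).congr_deriv ?_
  rw [show 2 * j - j = j by omega, mul_pow]
  push_cast
  ring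

theorem monotoneOn_mul_one_sub_pow (j : ℕ) :
    MonotoneOn (fun x : ℝ => (x * (1 - x)) ^ j) (Set.Icc 0 (1 / 2)) := by
  rintro x ⟨hx0, hx⟩ y ⟨-, hy⟩ hxy
  exact pow_le_pow_left₀ (by nlinarith) (by nlinarith) j

theorem p_convexOn (k : ℕ) (hk : 1 ≤ k) :
    ConvexOn ℝ (Set.Icc (0:ℝ) (1/2)) (p k) := by
  obtain ⟨j, rfl⟩ := Nat.exists_eq_add_of_le' hk
  have hdiff : Differentiable ℝ (p (j + 1)) := fun x => (hasDerivAt_p_succ j x).differentiableAt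
  refine MonotoneOn.convexOn_of_deriv (convex_Icc _ _) hdiff.continuous.continuousOn
    hdiff.differentiableOn ?_
  rw [funext fun x => (hasDerivAt_p_succ j x).deriv]
  exact fun x hx y hy hxy => mul_le_mul_of_nonneg_left
    (monotoneOn_mul_one_sub_pow j (interior_subset hx) (interior_subset hy) hxy) (by positivity)
end

section
/- For every integer k ≥ 1 and every integer n ≥ 1, n · p_k(1/n) ≤ 1. -/
open Finset

theorem add_one_pow_mul_p_one_div (k : ℕ) {t : ℝ} (ht : t + 1 ≠ 0) :
    (t + 1) ^ (2 * k - 1) * p k (1 / (t + 1)) =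
      ∑ ℓ ∈ range k, ((2 * k - 1).choose ℓ : ℝ) * t ^ ℓ := by
  rw [p, mul_sum]
  refine sum_congr rfl fun ℓ hℓ => ?_
  obtain ⟨a, ha⟩ : ∃ a, 2 * k - 1 = a + ℓ :=
    ⟨2 * k - 1 - ℓ, by have := mem_range.mp hℓ; omega⟩
  rw [ha, Nat.add_sub_cancel, one_sub_div ht, div_pow, div_pow, one_pow, pow_add,
    add_sub_cancel_right]
  field_simp

namespace Nat

theorem sum_range_succ_choose_mul_pow (n K m : ℕ) :
    ∑ ℓ ∈ range (K + 1), (n + 1).choose ℓ * m ^ ℓ =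
      ∑ ℓ ∈ range (K + 1), n.choose ℓ * m ^ ℓ + ∑ i ∈ range K, n.choose i * m ^ (i + 1) := by
  rw [sum_range_succ', sum_range_succ' (fun ℓ => n.choose ℓ * m ^ ℓ)]
  simp only [choose_succ_succ', add_mul, sum_add_distrib, choose_zero_right]
  ring

theorem sum_range_choose_mul_pow_succ_le (K m : ℕ) :
    ∑ i ∈ range K, (2 * K).choose i * m ^ (i + 1) ≤
      ∑ i ∈ range K, (2 * K).choose (K + 1 + i) * m ^ (K + 1 + i) := by
  rw [← sum_range_reflect]
  refine sum_le_sum fun i hi => ?_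
  have hi : i < K := mem_range.mp hi
  rw [show K + 1 + i = 2 * K - (K - 1 - i) by omega, choose_symm (by omega)]
  refine Nat.mul_le_mul_left _ ?_
  rcases m.eq_zero_or_pos with rfl | hm
  · simp
  · exact Nat.pow_le_pow_right hm (by omega)

theorem sum_range_choose_mul_pow_le (K m : ℕ) :
    ∑ ℓ ∈ range (K + 1), (2 * K + 1).choose ℓ * m ^ ℓ ≤ (m + 1) ^ (2 * K) := by
  have hsplit : ∑ j ∈ range (2 * K + 1), (2 * K).choose j * m ^ j =
      ∑ ℓ ∈ range (K + 1), (2 * K).choose ℓ * m ^ ℓ +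
        ∑ i ∈ range K, (2 * K).choose (K + 1 + i) * m ^ (K + 1 + i) := by
    rw [show 2 * K + 1 = K + 1 + K by ring, sum_range_add]
  calc _ = _ := sum_range_succ_choose_mul_pow (2 * K) K m
    _ ≤ _ := Nat.add_le_add_left (sum_range_choose_mul_pow_succ_le K m) _
    _ = (m + 1) ^ (2 * K) := by rw [← hsplit, add_pow]; simp [mul_comm]

end Nat

theorem n_mul_p_le_one (k n : ℕ) (hk : 1 ≤ k) (hn : 1 ≤ n) :
    (n : ℝ) * p k (1 / n) ≤ 1 := by
  obtain ⟨K, rfl⟩ := Nat.exists_eq_add_of_le' hk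
  obtain ⟨m, rfl⟩ := Nat.exists_eq_add_of_le' hn
  have hm : (0 : ℝ) < m + 1 := by positivity
  have hpoly := add_one_pow_mul_p_one_div (K + 1) hm.ne'
  rw [show 2 * (K + 1) - 1 = 2 * K + 1 by omega] at hpoly
  have hbound : ∑ ℓ ∈ range (K + 1), ((2 * K + 1).choose ℓ : ℝ) * (m : ℝ) ^ ℓ ≤
      ((m : ℝ) + 1) ^ (2 * K) := by
    exact_mod_cast Nat.sum_range_choose_mul_pow_le K m
  push_cast
  refine le_of_mul_le_mul_left ?_ (pow_pos hm (2 * K))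
  rw [mul_one, ← mul_assoc, ← pow_succ, hpoly]
  exact hbound
end

section
/- For any positive integers ℓ < m and any a ≥ 1, the integral of exp(-σ_ℓ(x_1,…,x_m)) over the set {x ∈ [0,∞)^m : x_m ≥ a} is at most (ℓ-1)·((m-1)!)² · a^{-(m-ℓ)/(ℓ-1)}, provided ℓ ≥ 2 and the m-1-variable bound ∫_{[0,∞)^{m-1}} exp(-σ_{ℓ-1}) ≤ ((m-1)!)² holds. -/
open MeasureTheory

def esymm (m ℓ : ℕ) (x : Fin m → ℝ) : ℝ :=
  ∑ I ∈ Finset.powersetCard ℓ (Finset.univ : Finset (Fin m)), ∏ i ∈ I, x i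

/-!
Write `n = m - 1` and `k = ℓ - 1`. For `x ≥ 0` we have `σ_{k+1}(x) ≥ x_i σ_k(x without x_i)`, so
by Fubini the tail integral is at most `∫_{t ≥ a} ∫_{y ≥ 0} exp (-t σ_k(y)) dy dt`. Since `σ_k` is
`k`-homogeneous, the substitution `z = t^{1/k} y` turns the inner integral into `t^{-n/k} J`, with
`J = ∫_{y ≥ 0} exp (-σ_k(y)) dy`, and `∫_a^∞ t^{-n/k} dt = k/(n-k) · a^{-(n-k)/k}`.

The hypothesis controls `J` only as a Bochner integral, so `J < ∞` is needed as well. It follows by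
induction on `k`: the orthant is covered by the unit cube and the tails `{x_i ≥ 1}`, each bounded by
the estimate above; for `k = 1` the integrand is `∏ exp (-x_i)`.
-/

open Finset
open scoped ENNReal

theorem esymm_nonneg {n k : ℕ} {x : Fin n → ℝ} (hx : 0 ≤ x) : 0 ≤ esymm n k x :=
  sum_nonneg fun _ _ => prod_nonneg fun i _ => hx i

theorem esymm_smul (n k : ℕ) (c : ℝ) (x : Fin n → ℝ) :
    esymm n k (c • x) = c ^ k * esymm n k x := by
  rw [esymm, esymm, mul_sum]
  refine sum_congr rfl fun I hI => ?_
  simp only [Pi.smul_apply, smul_eq_mul, prod_mul_distrib, prod_const,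
    (mem_powersetCard.1 hI).2]

theorem esymm_one (n : ℕ) (x : Fin n → ℝ) : esymm n 1 x = ∑ i, x i := by
  simp [esymm, powersetCard_one]

@[fun_prop]
theorem continuous_esymm (n k : ℕ) : Continuous (esymm n k) := by
  unfold esymm
  fun_prop

@[fun_prop]
theorem measurable_esymm (n k : ℕ) : Measurable (esymm n k) :=
  (continuous_esymm n k).measurable

@[fun_prop]
theorem Fin.measurable_removeNth {α : Type*} [MeasurableSpace α] {n : ℕ} (i : Fin (n + 1)) :
    Measurable (i.removeNth : (Fin (n + 1) → α) → Fin n → α) :=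
  measurable_pi_lambda _ fun j => measurable_pi_apply (i.succAbove j)

theorem mul_esymm_removeNth_le {n k : ℕ} {x : Fin (n + 1) → ℝ} (hx : 0 ≤ x) (i : Fin (n + 1)) :
    x i * esymm n k (i.removeNth x) ≤ esymm (n + 1) (k + 1) x := by
  have hi : ∀ I : Finset (Fin n), i ∉ I.map i.succAboveEmb := by simp [Fin.succAbove_ne]
  set insertPivot := fun I : Finset (Fin n) => insert i (I.map i.succAboveEmb)
  have hinj : Set.InjOn insertPivot (powersetCard k (univ : Finset (Fin n))) := by
    intro I _ J _ hIJ
    simpa [insertPivot, erase_insert (hi I), erase_insert (hi J)] using congrArg (erase · i) hIJ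
  have hsub : (powersetCard k univ).image insertPivot ⊆ powersetCard (k + 1) univ := by
    intro I hI
    obtain ⟨J, hJ, rfl⟩ := mem_image.1 hI
    simp [insertPivot, card_insert_of_notMem (hi J), (mem_powersetCard.1 hJ).2]
  calc x i * esymm n k (i.removeNth x)
      = ∑ I ∈ (powersetCard k univ).image insertPivot, ∏ j ∈ I, x j := by
        rw [sum_image hinj, esymm, mul_sum]
        refine sum_congr rfl fun I _ => ?_
        rw [prod_insert (hi I), prod_map]
        rfl
    _ ≤ esymm (n + 1) (k + 1) x :=
        sum_le_sum_of_subset_of_nonneg hsub fun I _ _ => prod_nonneg fun j _ => hx j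

theorem setLIntegral_tail_eq {n : ℕ} (i : Fin (n + 1)) {b : ℝ} (hb : 0 ≤ b)
    {F : ℝ → (Fin n → ℝ) → ℝ≥0∞} (hF : Measurable (Function.uncurry F)) :
    ∫⁻ x in {x : Fin (n + 1) → ℝ | (∀ j, 0 ≤ x j) ∧ b ≤ x i}, F (x i) (i.removeNth x)
      = ∫⁻ t in Set.Ici b, ∫⁻ y in Set.Ici 0, F t y := by
  let e := MeasurableEquiv.piFinSuccAbove (fun _ : Fin (n + 1) => ℝ) i
  have hset : {x : Fin (n + 1) → ℝ | (∀ j, 0 ≤ x j) ∧ b ≤ x i}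
      = e ⁻¹' (Set.Ici b ×ˢ Set.Ici 0) := by
    ext x
    simp only [Set.mem_ofPred_eq, Set.mem_preimage, Set.mem_prod, Set.mem_Ici,
      Fin.forall_iff_succAbove i, Pi.le_def]
    exact ⟨fun ⟨⟨_, h⟩, hbx⟩ => ⟨hbx, h⟩, fun ⟨hbx, h⟩ => ⟨⟨hb.trans hbx, h⟩, hbx⟩⟩
  calc ∫⁻ x in {x : Fin (n + 1) → ℝ | (∀ j, 0 ≤ x j) ∧ b ≤ x i}, F (x i) (i.removeNth x)
      = ∫⁻ p in Set.Ici b ×ˢ Set.Ici 0, Function.uncurry F p := by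
        rw [hset]
        exact (volume_preserving_piFinSuccAbove _ i).setLIntegral_comp_preimage_emb
          e.measurableEmbedding (Function.uncurry F) _
    _ = ∫⁻ t in Set.Ici b, ∫⁻ y in Set.Ici 0, F t y := by
        rw [Measure.volume_eq_prod, ← Measure.prod_restrict, lintegral_prod _ hF.aemeasurable]
        rfl

theorem setLIntegral_comp_smul_addHaar {E : Type*} [NormedAddCommGroup E] [NormedSpace ℝ E]
    [MeasurableSpace E] [BorelSpace E] [FiniteDimensional ℝ E] (μ : Measure E)
    [μ.IsAddHaarMeasure] (f : E → ℝ≥0∞) (s : Set E) {c : ℝ} (hc : c ≠ 0) :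
    ∫⁻ x in (c • ·) ⁻¹' s, f (c • x) ∂μ
      = ENNReal.ofReal |(c ^ Module.finrank ℝ E)⁻¹| * ∫⁻ x in s, f x ∂μ := by
  have he : MeasurableEmbedding (c • · : E → E) := (MeasurableEquiv.smul₀ c hc).measurableEmbedding
  calc ∫⁻ x in (c • ·) ⁻¹' s, f (c • x) ∂μ = ∫⁻ x in s, f x ∂(μ.map (c • ·)) := by
        rw [he.restrict_map, he.lintegral_map]
    _ = _ := by
        rw [Measure.map_addHaar_smul μ hc, Measure.restrict_smul, lintegral_smul_measure,
          smul_eq_mul]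

noncomputable def lintegralExpNegEsymm (n k : ℕ) : ℝ≥0∞ :=
  ∫⁻ x in Set.Ici 0, ENNReal.ofReal (Real.exp (-esymm n k x))

theorem lintegral_exp_neg_mul_esymm {n k : ℕ} (hk : k ≠ 0) {t : ℝ} (ht : 0 < t) :
    ∫⁻ y in Set.Ici 0, ENNReal.ofReal (Real.exp (-(t * esymm n k y)))
      = ENNReal.ofReal (t ^ (-(n / k : ℝ))) * lintegralExpNegEsymm n k := by
  set c := t ^ (k⁻¹ : ℝ)
  have hc : 0 < c := Real.rpow_pos_of_pos ht _
  have hck : c ^ k = t := Real.rpow_inv_natCast_pow ht.le hk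
  have hpre : (c • ·) ⁻¹' Set.Ici 0 = Set.Ici (0 : Fin n → ℝ) := by
    ext y
    exact smul_nonneg_iff_nonneg_of_pos_left (β := Fin n → ℝ) hc
  have hconst : |(c ^ Module.finrank ℝ (Fin n → ℝ))⁻¹| = t ^ (-(n / k : ℝ)) := by
    rw [Module.finrank_fin_fun, abs_of_nonneg (by positivity), ← Real.rpow_natCast,
      ← Real.rpow_mul ht.le, ← Real.rpow_neg ht.le, inv_mul_eq_div]
  have := setLIntegral_comp_smul_addHaar volume
    (fun z => ENNReal.ofReal (Real.exp (-esymm n k z))) (Set.Ici 0) hc.ne'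
  simp only [hpre, esymm_smul, hck, hconst] at this
  exact this

theorem setLIntegral_Ici_rpow_of_lt {p : ℝ} (hp : p < -1) {a : ℝ} (ha : 0 < a) :
    ∫⁻ t in Set.Ici a, ENNReal.ofReal (t ^ p) = ENNReal.ofReal (-a ^ (p + 1) / (p + 1)) := by
  rw [Measure.restrict_congr_set Ioi_ae_eq_Ici.symm, ← integral_Ioi_rpow_of_lt hp ha,
    ofReal_integral_eq_lintegral_ofReal (integrableOn_Ioi_rpow_of_lt hp ha)]
  filter_upwards [ae_restrict_mem measurableSet_Ioi] with t ht
  exact Real.rpow_nonneg (ha.trans ht).le p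

theorem setLIntegral_tail_exp_neg_esymm_le {n k : ℕ} (hk : k ≠ 0) (hkn : k < n)
    (i : Fin (n + 1)) {a : ℝ} (ha : 0 < a) :
    ∫⁻ x in {x : Fin (n + 1) → ℝ | (∀ j, 0 ≤ x j) ∧ a ≤ x i},
        ENNReal.ofReal (Real.exp (-esymm (n + 1) (k + 1) x))
      ≤ ENNReal.ofReal (k / (n - k) * a ^ (-((n - k) / k : ℝ))) * lintegralExpNegEsymm n k := by
  have hk' : (0 : ℝ) < k := by exact_mod_cast Nat.pos_of_ne_zero hk
  have hkn' : (k : ℝ) < n := by exact_mod_cast hkn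
  have hp : -(n / k : ℝ) < -1 := by rw [neg_lt_neg_iff, one_lt_div hk']; exact hkn'
  calc ∫⁻ x in {x : Fin (n + 1) → ℝ | (∀ j, 0 ≤ x j) ∧ a ≤ x i},
        ENNReal.ofReal (Real.exp (-esymm (n + 1) (k + 1) x))
      ≤ ∫⁻ x in {x : Fin (n + 1) → ℝ | (∀ j, 0 ≤ x j) ∧ a ≤ x i},
          ENNReal.ofReal (Real.exp (-(x i * esymm n k (i.removeNth x)))) :=
        setLIntegral_mono (by fun_prop) fun x hx => ENNReal.ofReal_le_ofReal <|
          Real.exp_le_exp.2 <| neg_le_neg <| mul_esymm_removeNth_le hx.1 i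
    _ = ∫⁻ t in Set.Ici a, ∫⁻ y in Set.Ici 0, ENNReal.ofReal (Real.exp (-(t * esymm n k y))) :=
        setLIntegral_tail_eq i ha.le
          (F := fun t y => ENNReal.ofReal (Real.exp (-(t * esymm n k y)))) (by fun_prop)
    _ = ∫⁻ t in Set.Ici a, ENNReal.ofReal (t ^ (-(n / k : ℝ))) * lintegralExpNegEsymm n k :=
        setLIntegral_congr_fun measurableSet_Ici fun t ht =>
          lintegral_exp_neg_mul_esymm hk (ha.trans_le ht)
    _ = ENNReal.ofReal (k / (n - k) * a ^ (-((n - k) / k : ℝ))) * lintegralExpNegEsymm n k := by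
        rw [lintegral_mul_const _ (by fun_prop), setLIntegral_Ici_rpow_of_lt hp ha]
        congr 2
        rw [show -(n / k : ℝ) + 1 = -((n - k) / k) by field_simp; ring]
        field_simp

theorem lintegralExpNegEsymm_one_lt_top (n : ℕ) : lintegralExpNegEsymm n 1 < ⊤ := by
  have hexp : ∀ x : Fin n → ℝ, Real.exp (-esymm n 1 x) = ∏ i, Real.exp (-x i) := by
    simp [esymm_one, ← Real.exp_sum]
  have hint : IntegrableOn (fun t : ℝ => Real.exp (-t)) (Set.Ici 0) := by
    rw [integrableOn_Ici_iff_integrableOn_Ioi]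
    simpa using exp_neg_integrableOn_Ioi 0 one_pos
  have hrestrict : (volume : Measure (Fin n → ℝ)).restrict (Set.Ici 0)
      = Measure.pi fun _ => volume.restrict (Set.Ici 0) := by
    rw [← Set.pi_univ_Ici, volume_pi, Measure.restrict_pi_pi]
    rfl
  simp only [lintegralExpNegEsymm, hexp, hrestrict]
  exact (Integrable.fintype_prod fun _ => hint).lintegral_lt_top

theorem setLIntegral_Ici_le_one_add_sum_tails {n : ℕ} {f : (Fin n → ℝ) → ℝ≥0∞}
    (hf : ∀ x, 0 ≤ x → f x ≤ 1) :
    ∫⁻ x in Set.Ici 0, f x ≤ 1 + ∑ i, ∫⁻ x in {x : Fin n → ℝ | (∀ j, 0 ≤ x j) ∧ 1 ≤ x i}, f x := by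
  have hcover : Set.Ici 0 ⊆ Set.Icc 0 1 ∪ ⋃ i, {x : Fin n → ℝ | (∀ j, 0 ≤ x j) ∧ 1 ≤ x i} := by
    intro x hx
    by_cases h : ∃ i, 1 ≤ x i
    · obtain ⟨i, hi⟩ := h
      exact Or.inr (Set.mem_iUnion.2 ⟨i, hx, hi⟩)
    · push Not at h
      exact Or.inl ⟨hx, fun i => (h i).le⟩
  have hbox : ∫⁻ x in Set.Icc 0 1, f x ≤ 1 :=
    calc ∫⁻ x in Set.Icc 0 1, f x ≤ ∫⁻ _ in Set.Icc (0 : Fin n → ℝ) 1, 1 :=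
          setLIntegral_mono' measurableSet_Icc fun x hx => hf x hx.1
      _ = 1 := by simp [Real.volume_Icc_pi]
  calc ∫⁻ x in Set.Ici 0, f x
      ≤ ∫⁻ x in Set.Icc 0 1 ∪ ⋃ i, {x : Fin n → ℝ | (∀ j, 0 ≤ x j) ∧ 1 ≤ x i}, f x :=
        lintegral_mono_set hcover
    _ ≤ (∫⁻ x in Set.Icc 0 1, f x)
          + ∫⁻ x in ⋃ i, {x : Fin n → ℝ | (∀ j, 0 ≤ x j) ∧ 1 ≤ x i}, f x :=
        lintegral_union_le f _ _
    _ ≤ 1 + ∑ i, ∫⁻ x in {x : Fin n → ℝ | (∀ j, 0 ≤ x j) ∧ 1 ≤ x i}, f x :=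
        add_le_add hbox ((lintegral_iUnion_le _ f).trans_eq (tsum_fintype _))

theorem lintegralExpNegEsymm_lt_top {n k : ℕ} (hk : k ≠ 0) (hkn : k < n) :
    lintegralExpNegEsymm n k < ⊤ := by
  induction k generalizing n with
  | zero => exact absurd rfl hk
  | succ j ih =>
    obtain rfl | hj := eq_or_ne j 0
    · exact lintegralExpNegEsymm_one_lt_top n
    obtain ⟨n, rfl⟩ : ∃ n', n = n' + 1 := ⟨n - 1, by omega⟩
    have hJ := ih (n := n) hj (by omega)
    calc lintegralExpNegEsymm (n + 1) (j + 1)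
        ≤ 1 + ∑ i, ∫⁻ x in {x : Fin (n + 1) → ℝ | (∀ l, 0 ≤ x l) ∧ 1 ≤ x i},
            ENNReal.ofReal (Real.exp (-esymm (n + 1) (j + 1) x)) :=
          setLIntegral_Ici_le_one_add_sum_tails fun x hx =>
            ENNReal.ofReal_le_one.2 (Real.exp_le_one_iff.2 (neg_nonpos.2 (esymm_nonneg hx)))
      _ < ⊤ := ENNReal.add_lt_top.2 ⟨ENNReal.one_lt_top, ENNReal.sum_lt_top.2 fun i _ =>
          (setLIntegral_tail_exp_neg_esymm_le hj (by omega) i one_pos).trans_lt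
            (ENNReal.mul_lt_top ENNReal.ofReal_lt_top hJ)⟩

theorem integral_tail_exp_neg_esymm_le {n k : ℕ} (hk : k ≠ 0) (hkn : k < n)
    (i : Fin (n + 1)) {a : ℝ} (ha : 0 < a) :
    ∫ x in {x : Fin (n + 1) → ℝ | (∀ j, 0 ≤ x j) ∧ a ≤ x i}, Real.exp (-esymm (n + 1) (k + 1) x)
      ≤ k / (n - k) * a ^ (-((n - k) / k : ℝ))
          * ∫ x in Set.Ici 0, Real.exp (-esymm n k x) := by
  have hc : 0 ≤ k / (n - k) * a ^ (-((n - k) / k : ℝ)) := by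
    have : (k : ℝ) ≤ n := by exact_mod_cast hkn.le
    exact mul_nonneg (div_nonneg k.cast_nonneg (sub_nonneg.2 this)) (Real.rpow_nonneg ha.le _)
  have hJ : (lintegralExpNegEsymm n k).toReal = ∫ x in Set.Ici 0, Real.exp (-esymm n k x) :=
    (integral_eq_lintegral_of_nonneg_ae (ae_of_all _ fun _ => (Real.exp_pos _).le)
      (by fun_prop)).symm
  rw [integral_eq_lintegral_of_nonneg_ae (ae_of_all _ fun _ => (Real.exp_pos _).le)
    (by fun_prop), ← hJ, ← ENNReal.toReal_ofReal hc, ← ENNReal.toReal_mul]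
  exact ENNReal.toReal_mono (ENNReal.mul_ne_top ENNReal.ofReal_ne_top
    (lintegralExpNegEsymm_lt_top hk hkn).ne) (setLIntegral_tail_exp_neg_esymm_le hk hkn i ha)

theorem integral_tail_le (ℓ m : ℕ) (hℓ : 2 ≤ ℓ) (hℓm : ℓ < m) (a : ℝ) (ha : 1 ≤ a)
    (hind : (∫ x in {x : Fin (m-1) → ℝ | ∀ i, 0 ≤ x i}, Real.exp (-esymm (m-1) (ℓ-1) x))
        ≤ ((Nat.factorial (m-1) : ℝ))^2) :
    (∫ x in {x : Fin m → ℝ | (∀ i, 0 ≤ x i) ∧ a ≤ x ⟨m-1, by omega⟩},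
        Real.exp (-esymm m ℓ x))
      ≤ ((ℓ : ℝ) - 1) * ((Nat.factorial (m-1) : ℝ))^2
          * a ^ (-(((m : ℝ) - ℓ) / ((ℓ : ℝ) - 1))) := by
  obtain ⟨n, rfl⟩ : ∃ n, m = n + 1 := ⟨m - 1, by omega⟩
  obtain ⟨k, rfl⟩ : ∃ k, ℓ = k + 1 := ⟨ℓ - 1, by omega⟩
  have hk : k ≠ 0 := by omega
  have hkn : (k : ℝ) + 1 ≤ n := by exact_mod_cast Nat.lt_of_add_lt_add_right hℓm
  have hconst : (k : ℝ) / (n - k) ≤ k := div_le_self k.cast_nonneg (by linarith)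
  simp only [Nat.cast_add, Nat.cast_one, add_sub_cancel_right, add_sub_add_right_eq_sub]
  calc _ ≤ k / (n - k) * a ^ (-((n - k) / k : ℝ))
          * ∫ x in Set.Ici 0, Real.exp (-esymm n k x) :=
        integral_tail_exp_neg_esymm_le hk (by omega) (Fin.last n) (by linarith)
    _ ≤ k * a ^ (-((n - k) / k : ℝ)) * (n.factorial : ℝ) ^ 2 := by
        gcongr
        exact hind
    _ = k * (n.factorial : ℝ) ^ 2 * a ^ (-((n - k) / k : ℝ)) := by ring
end

section
/- Let k ≥ 1 and x_1,…,x_{2k-1} ∈ [0,1], and let Q(x_1,…,x_{2k-1}) = ℙ[y_i < x_i for at least k indices i], with y_1,…,y_{2k-1} i.i.d. uniform on [0,1]. Then Q(x_1,…,x_{2k-1}) ≥ 2^{-2k+1} · σ_k(x_1,…,x_{2k-1}). -/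
open MeasureTheory

/-- `Q k x` is the probability that independent uniform random variables
`y i ∈ [0,1]` satisfy `y i < x i` for at least `k` indices `i`. -/
noncomputable def Q (k : ℕ) (x : Fin (2*k-1) → ℝ) : ℝ :=
  (volume {y : Fin (2*k-1) → ℝ |
      (∀ i, y i ∈ Set.Icc (0:ℝ) 1) ∧
        k ≤ (Finset.univ.filter (fun i => y i < x i)).card}).toReal

/-!
For every `k`-subset `J`, the event contains the box where `y i < x i` for `i ∈ J` (and `y i`
is arbitrary in `[0,1]` otherwise), whose volume is `∏ i ∈ J, x i`. So `Q` dominates every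
monomial of `σ_k`, and `σ_k` has `C(2k-1, k) ≤ 2^(2k-1)` monomials.
-/

open Finset Set

section
variable {n : ℕ}

def atLeastBelow (k : ℕ) (x : Fin n → ℝ) : Set (Fin n → ℝ) :=
  {y | (∀ i, y i ∈ Icc (0:ℝ) 1) ∧ k ≤ #{i | y i < x i}}

lemma Q_eq_measureReal (k : ℕ) (x : Fin (2*k-1) → ℝ) :
    Q k x = volume.real (atLeastBelow k x) := rfl

lemma volume_atLeastBelow_ne_top (k : ℕ) (x : Fin n → ℝ) :
    volume (atLeastBelow k x) ≠ ⊤ := by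
  have hcube : atLeastBelow k x ⊆ univ.pi fun _ => Icc 0 1 := fun _ hy i _ => hy.1 i
  refine ne_top_of_le_ne_top ?_ (measure_mono hcube)
  rw [volume_pi_pi]
  simp [Real.volume_Icc]

lemma volume_real_univ_pi_ite (J : Finset (Fin n)) (x : Fin n → ℝ) (hx : ∀ i, 0 ≤ x i) :
    volume.real (univ.pi fun i => if i ∈ J then Ico 0 (x i) else Icc (0:ℝ) 1) =
      ∏ i ∈ J, x i := by
  have hside : ∀ i, volume.real (if i ∈ J then Ico 0 (x i) else Icc (0:ℝ) 1) =
      if i ∈ J then x i else 1 := fun i => by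
    split_ifs
    · simp [hx i]
    · simp
  rw [measureReal_def, volume_pi_pi, ENNReal.toReal_prod]
  simp only [← measureReal_def, hside]
  rw [prod_ite_mem, Finset.univ_inter]

lemma univ_pi_ite_subset_atLeastBelow {k : ℕ} {x : Fin n → ℝ} (hx : ∀ i, x i ≤ 1)
    {J : Finset (Fin n)} (hJ : k ≤ #J) :
    (univ.pi fun i => if i ∈ J then Ico 0 (x i) else Icc (0:ℝ) 1) ⊆ atLeastBelow k x := by
  intro y hy
  simp only [mem_univ_pi] at hy
  refine ⟨fun i => ?_, hJ.trans (card_le_card fun i hi => ?_)⟩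
  · specialize hy i
    split_ifs at hy
    · exact ⟨hy.1, hy.2.le.trans (hx i)⟩
    · exact hy
  · have hyi := hy i
    rw [if_pos hi] at hyi
    simpa using hyi.2

lemma prod_le_measureReal_atLeastBelow {k : ℕ} {x : Fin n → ℝ} (hx : ∀ i, x i ∈ Icc (0:ℝ) 1)
    {J : Finset (Fin n)} (hJ : k ≤ #J) :
    ∏ i ∈ J, x i ≤ volume.real (atLeastBelow k x) := by
  rw [← volume_real_univ_pi_ite J x fun i => (hx i).1]
  exact measureReal_mono (univ_pi_ite_subset_atLeastBelow (fun i => (hx i).2) hJ)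
    (volume_atLeastBelow_ne_top k x)

end

lemma esymm_le_choose_mul {m ℓ : ℕ} {x : Fin m → ℝ} {c : ℝ}
    (h : ∀ J : Finset (Fin m), #J = ℓ → ∏ i ∈ J, x i ≤ c) :
    esymm m ℓ x ≤ m.choose ℓ * c :=
  calc esymm m ℓ x ≤ ∑ _J ∈ powersetCard ℓ (univ : Finset (Fin m)), c :=
        sum_le_sum fun J hJ => h J (mem_powersetCard.mp hJ).2
    _ = m.choose ℓ * c := by simp

lemma two_rpow_neg_two_mul_add_one {k : ℕ} (hk : 1 ≤ k) :
    (2:ℝ) ^ (-2 * (k:ℝ) + 1) = ((2:ℝ) ^ (2 * k - 1))⁻¹ := by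
  rw [← Real.rpow_natCast, ← Real.rpow_neg zero_le_two]
  congr 1
  push_cast [show 1 ≤ 2 * k by omega]
  ring

theorem Q_ge_esymm_div (k : ℕ) (hk : 1 ≤ k) (x : Fin (2*k-1) → ℝ)
    (hx : ∀ i, x i ∈ Set.Icc (0:ℝ) 1) :
    (2:ℝ)^(-2*(k:ℝ)+1) * esymm (2*k-1) k x ≤ Q k x := by
  rw [two_rpow_neg_two_mul_add_one hk, inv_mul_le_iff₀ (by positivity), Q_eq_measureReal]
  calc esymm (2*k-1) k x ≤ (2*k-1).choose k * volume.real (atLeastBelow k x) :=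
        esymm_le_choose_mul fun J hJ => prod_le_measureReal_atLeastBelow hx hJ.ge
    _ ≤ 2 ^ (2*k-1) * volume.real (atLeastBelow k x) := by
        gcongr
        exact_mod_cast Nat.choose_le_two_pow _ _
end

section
/- Let n ≥ 1, k ≥ 1, and let π be any probability distribution on the set of all rankings (permutations) of n alternatives. If 2k-1 voters independently sample rankings σ_1,…,σ_{2k-1} from π, then the probability that a Condorcet winner exists is at least n^{-(2k-2)} · ∑_{ℓ=0}^{k-1} C(2k-1, ℓ) (n-1)^ℓ. -/
/-!
Let `q a` be the probability that a random ranking puts `a` first. An alternative that is ranked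
first by a majority (`k` of the `2k-1` voters) is a Condorcet winner, and at most one alternative
can be, so the probability of a Condorcet winner is at least `∑ a, p (q a)`, where `p x` is the
probability that at least `k` of `2k-1` independent `x`-coins come up heads.

It remains to minimise `∑ a, p (q a)` over the simplex. Since `p' x` is a multiple of
`(x (1-x))^(k-1)`, `p` is convex on `[0, 1/2]` and lies above its tangents at `u ≤ 1/2` on all of
`[0, 1-u]`. Let `b` maximise `q` and `s = 1 - q b ≤ 1 - 1/n`. The tangent at `s/(n-1)` bounds the
other `n-1` terms by `(n-1) p (s/(n-1))`, and `p (q b) = 1 - p s` by symmetry; the resulting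
bound `1 - (p s - (n-1) p (s/(n-1)))` decreases in `s`, so it is smallest at `s = 1 - 1/n`, where
it equals `n p (1/n)`.
-/

open Finset

/-- `A` is a Condorcet winner for the profile `prof` of `2k-1` rankings (a ranking is a
permutation of `Fin n`; voter `i` prefers `a` over `b` iff `prof i a < prof i b`):
for every other alternative `b`, at least `k` of the voters rank `a` above `b`. -/
def CondorcetWinner {n : ℕ} (k : ℕ) (prof : Fin (2*k-1) → Equiv.Perm (Fin n))
    (a : Fin n) : Prop :=
  ∀ b : Fin n, b ≠ a → k ≤ (univ.filter (fun i => prof i a < prof i b)).card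

def IncreasesTowardHalf (g : ℝ → ℝ) : Prop :=
  ∀ ⦃v y : ℝ⦄, 0 ≤ v → v ≤ y → y ≤ 1 - v → g v ≤ g y

theorem increasesTowardHalf_mul_pow {c : ℝ} (hc : 0 ≤ c) (j : ℕ) :
    IncreasesTowardHalf fun x => c * (x * (1 - x)) ^ j := fun _ _ _ _ _ =>
  mul_le_mul_of_nonneg_left (pow_le_pow_left₀ (by nlinarith) (by nlinarith) j) hc

namespace IncreasesTowardHalf

variable {f f' : ℝ → ℝ}

theorem add_mul_sub_le (hf' : IncreasesTowardHalf f') (hf : ∀ x, HasDerivAt f (f' x) x)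
    {u x : ℝ} (hu0 : 0 ≤ u) (hu : u ≤ 1 - u) (hx0 : 0 ≤ x) (hx : x ≤ 1 - u) :
    f u + f' u * (x - u) ≤ f x := by
  have hd : Differentiable ℝ f := fun y => (hf y).differentiableAt
  rcases le_total u x with hux | hxu
  · have := (convex_Icc u (1 - u)).mul_sub_le_image_sub_of_le_deriv hd.continuous.continuousOn
      hd.differentiableOn (C := f' u) (fun y hy => by
        rw [interior_Icc] at hy
        exact (hf y).deriv ▸ hf' hu0 hy.1.le hy.2.le) u ⟨le_rfl, hu⟩ x ⟨hux, hx⟩ hux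
    linarith
  · have := (convex_Icc 0 u).image_sub_le_mul_sub_of_deriv_le hd.continuous.continuousOn
      hd.differentiableOn (C := f' u) (fun y hy => by
        rw [interior_Icc] at hy
        exact (hf y).deriv ▸ hf' hy.1.le hy.2.le (by linarith [hy.2])) x ⟨hx0, hxu⟩ u
      ⟨hu0, le_rfl⟩ hxu
    linarith

theorem card_mul_le_sum {ι : Type*} (hf' : IncreasesTowardHalf f')
    (hf : ∀ x, HasDerivAt f (f' x) x) (S : Finset ι) {x : ι → ℝ} {u : ℝ}
    (hsum : ∑ a ∈ S, x a = #S * u) (hx0 : ∀ a ∈ S, 0 ≤ x a) (hx1 : ∀ a ∈ S, x a ≤ 1 - u) :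
    #S * f u ≤ ∑ a ∈ S, f (x a) := by
  rcases S.eq_empty_or_nonempty with rfl | hS
  · simp
  have hcard : (0 : ℝ) < #S := by exact_mod_cast hS.card_pos
  have hu0 : 0 ≤ u := by
    have : 0 ≤ #S * u := hsum ▸ sum_nonneg hx0
    exact nonneg_of_mul_nonneg_right (by linarith) hcard
  have hu : u ≤ 1 - u := by
    have : (#S : ℝ) * u ≤ #S * (1 - u) := by
      rw [← hsum, ← nsmul_eq_mul]
      exact sum_le_card_nsmul _ _ _ hx1
    exact le_of_mul_le_mul_left this hcard
  calc (#S : ℝ) * f u = ∑ a ∈ S, (f u + f' u * (x a - u)) := by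
        rw [sum_add_distrib, ← mul_sum, sum_sub_distrib, hsum]; simp
    _ ≤ ∑ a ∈ S, f (x a) :=
        sum_le_sum fun a ha => hf'.add_mul_sub_le hf hu0 hu (hx0 a ha) (hx1 a ha)

theorem monotoneOn_comp_mul_sub_mul (hf' : IncreasesTowardHalf f')
    (hf : ∀ x, HasDerivAt f (f' x) x) {c : ℝ} (hc : 1 ≤ c) :
    MonotoneOn (fun u => f (c * u) - c * f u) (Set.Icc 0 (1 / (c + 1))) := by
  have hG (u : ℝ) : HasDerivAt (fun u => f (c * u) - c * f u) (c * (f' (c * u) - f' u)) u :=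
    (((hf (c * u)).comp u ((hasDerivAt_id u).const_mul c)).fun_sub
      ((hf u).const_mul c)).congr_deriv (by ring)
  refine monotoneOn_of_hasDerivWithinAt_nonneg (convex_Icc _ _)
    (fun u _ => (hG u).continuousAt.continuousWithinAt) (fun u _ => (hG u).hasDerivWithinAt)
    fun u hu => ?_
  rw [interior_Icc] at hu
  have : (c + 1) * u ≤ 1 := by
    rw [← le_div_iff₀' (by linarith)]
    exact hu.2.le
  exact mul_nonneg (by linarith) (sub_nonneg.2 (hf' hu.1.le (by nlinarith [hu.1]) (by linarith)))

theorem add_one_mul_le_apply_one_sub_add_mul (hf' : IncreasesTowardHalf f')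
    (hf : ∀ x, HasDerivAt f (f' x) x) (hsymm : ∀ x, f x + f (1 - x) = 1) {c s : ℝ} (hc : 1 ≤ c)
    (hs0 : 0 ≤ s) (hs : (c + 1) * s ≤ c) :
    (c + 1) * f (1 / (c + 1)) ≤ f (1 - s) + c * f (s / c) := by
  have hc1 : c + 1 ≠ 0 := by linarith
  have hct : c * (1 / (c + 1)) = 1 - 1 / (c + 1) := by field_simp; ring
  have hst : s / c ≤ 1 / (c + 1) := by
    rw [div_le_div_iff₀ (by linarith) (by linarith)]
    linarith
  have hG := hf'.monotoneOn_comp_mul_sub_mul hf hc ⟨by positivity, hst⟩ ⟨by positivity, le_rfl⟩ hst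
  simp only [mul_div_cancel₀ s (by linarith : c ≠ 0), hct] at hG
  linarith [hsymm s, hsymm (1 / (c + 1))]

theorem card_mul_le_sum_of_mem_stdSimplex {ι : Type*} [Fintype ι]
    (hf' : IncreasesTowardHalf f') (hf : ∀ x, HasDerivAt f (f' x) x)
    (hsymm : ∀ x, f x + f (1 - x) = 1) {q : ι → ℝ} (hq : q ∈ stdSimplex ℝ ι) :
    Fintype.card ι * f (1 / Fintype.card ι) ≤ ∑ a, f (q a) := by
  classical
  obtain ⟨hq0, hq1⟩ := hq
  have : Nonempty ι := by
    by_contra h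
    simp [not_nonempty_iff.1 h] at hq1
  obtain hcard | hcard : Fintype.card ι = 1 ∨ 2 ≤ Fintype.card ι := by
    have := Fintype.card_pos (α := ι)
    omega
  · obtain ⟨b, hb⟩ := Fintype.card_eq_one_iff.1 hcard
    rw [Fintype.sum_eq_single b fun a ha => absurd (hb a) ha] at hq1 ⊢
    simp [hcard, hq1]
  obtain ⟨b, hb⟩ := Finite.exists_max q
  set c : ℝ := (#(univ.erase b) : ℝ)
  set s := ∑ a ∈ univ.erase b, q a
  have hn : (Fintype.card ι : ℝ) = c + 1 := by
    rw [← card_univ, ← card_erase_add_one (mem_univ b), Nat.cast_add_one]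
  have hc : 1 ≤ c := by linarith [show (2 : ℝ) ≤ Fintype.card ι by exact_mod_cast hcard]
  have hqb : q b = 1 - s := by
    rw [← hq1, ← add_sum_erase _ _ (mem_univ b)]
    ring
  have hs : (c + 1) * s ≤ c := by
    have : 1 ≤ (c + 1) * q b := calc
      (1 : ℝ) = ∑ a, q a := hq1.symm
      _ ≤ ∑ _a : ι, q b := sum_le_sum fun a _ => hb a
      _ = (c + 1) * q b := by rw [sum_const, card_univ, nsmul_eq_mul, hn]
    rw [hqb] at this
    linarith
  have hs0 : 0 ≤ s := sum_nonneg fun a _ => hq0 a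
  have hsc : s / c ≤ 1 - s := by
    rw [div_le_iff₀ (by linarith)]
    linarith
  have hrest : c * f (s / c) ≤ ∑ a ∈ univ.erase b, f (q a) :=
    hf'.card_mul_le_sum hf _ (mul_div_cancel₀ s (by linarith)).symm (fun a _ => hq0 a)
      fun a ha => by linarith [(single_le_sum (fun a _ => hq0 a) ha : q a ≤ s)]
  rw [hn, ← add_sum_erase _ _ (mem_univ b), hqb]
  linarith [hf'.add_one_mul_le_apply_one_sub_add_mul hf hsymm hc hs0 hs]

end IncreasesTowardHalf

noncomputable def majorityProb (k : ℕ) (x : ℝ) : ℝ :=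
  ∑ ℓ ∈ range k, ((2 * k - 1).choose ℓ : ℝ) * (x ^ (2 * k - 1 - ℓ) * (1 - x) ^ ℓ)

theorem majorityProb_eq_sum_upper (k : ℕ) (x : ℝ) :
    majorityProb k x = ∑ j ∈ range k,
      ((2 * k - 1).choose (k + j) : ℝ) * (x ^ (k + j) * (1 - x) ^ (2 * k - 1 - (k + j))) := by
  rw [majorityProb, ← sum_range_reflect]
  refine sum_congr rfl fun j hj => ?_
  have hj := mem_range.1 hj
  have h : 2 * k - 1 - (k - 1 - j) = k + j := by omega
  rw [h, ← Nat.choose_symm (by omega : k - 1 - j ≤ 2 * k - 1), h]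
  congr 3
  omega

theorem majorityProb_add_majorityProb_one_sub {k : ℕ} (hk : 1 ≤ k) (x : ℝ) :
    majorityProb k x + majorityProb k (1 - x) = 1 := by
  have h := add_pow x (1 - x) (2 * k - 1)
  rw [add_sub_cancel, one_pow, show 2 * k - 1 + 1 = k + k by omega, sum_range_add] at h
  conv_rhs => rw [h, add_comm]
  rw [majorityProb_eq_sum_upper, majorityProb]
  simp only [sub_sub_cancel]
  congr 1 <;> exact sum_congr rfl fun j _ => by ring

theorem hasDerivAt_majorityProb (k : ℕ) (x : ℝ) :
    HasDerivAt (majorityProb k) (k * (2 * k - 1).choose k * (x * (1 - x)) ^ (k - 1)) x := by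
  set m := 2 * k - 1
  set g : ℕ → ℝ := fun ℓ => ℓ * m.choose ℓ * (x ^ (m - ℓ) * (1 - x) ^ (ℓ - 1))
  have hterm : ∀ ℓ ∈ range k, HasDerivAt (fun y => (m.choose ℓ : ℝ) * (y ^ (m - ℓ) * (1 - y) ^ ℓ))
      (g (ℓ + 1) - g ℓ) x := by
    intro ℓ hℓ
    have hℓ : ℓ + 1 ≤ m := by have := mem_range.1 hℓ; omega
    refine (((hasDerivAt_pow (m - ℓ) x).fun_mul ((hasDerivAt_pow ℓ (1 - x)).comp x
      ((hasDerivAt_id x).const_sub 1))).const_mul (m.choose ℓ : ℝ)).congr_deriv ?_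
    have hc : ((ℓ + 1 : ℕ) : ℝ) * m.choose (ℓ + 1) = m.choose ℓ * ((m - ℓ : ℕ) : ℝ) := by
      rw [mul_comm]
      exact_mod_cast Nat.choose_succ_right_eq m ℓ
    simp only [g, hc, Function.comp_apply, show m - (ℓ + 1) = m - ℓ - 1 by omega,
      Nat.add_sub_cancel]
    ring
  have hp : majorityProb k =
      fun y => ∑ ℓ ∈ range k, (m.choose ℓ : ℝ) * (y ^ (m - ℓ) * (1 - y) ^ ℓ) := rfl
  rw [hp]
  refine (HasDerivAt.fun_sum hterm).congr_deriv ?_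
  rw [sum_range_sub]
  simp only [g, show m - k = k - 1 by omega, mul_pow]
  push_cast
  ring

theorem mul_majorityProb_one_div (k : ℕ) {N : ℝ} (hN : N ≠ 0) :
    N * majorityProb k (1 / N) =
      (N ^ (2 * k - 2))⁻¹ * ∑ ℓ ∈ range k, ((2 * k - 1).choose ℓ : ℝ) * (N - 1) ^ ℓ := by
  rw [majorityProb, mul_sum, mul_sum]
  refine sum_congr rfl fun ℓ hℓ => ?_
  have hℓ := mem_range.1 hℓ
  have e : N ^ (2 * k - 1 - ℓ) * N ^ ℓ = N * N ^ (2 * k - 2) := by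
    rw [← pow_add, ← pow_succ', show 2 * k - 1 - ℓ + ℓ = 2 * k - 2 + 1 by omega]
  rw [one_sub_div hN, div_pow, div_pow, one_pow]
  field_simp
  linear_combination -(((2 * k - 1).choose ℓ : ℝ) * (N - 1) ^ ℓ) * e

theorem prod_ite_mem_univ {ι R : Type*} [Fintype ι] [DecidableEq ι] [CommMonoid R]
    (S : Finset ι) (a b : R) :
    ∏ i, (if i ∈ S then a else b) = a ^ #S * b ^ (Fintype.card ι - #S) := by
  have hSc : ({i | i ∉ S} : Finset ι) = Sᶜ := by ext; simp
  rw [prod_ite, prod_const, prod_const, filter_mem_eq_inter, univ_inter, hSc, card_compl]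

theorem sum_apply_card_filter_mul_prod {ι α R : Type*} [Fintype ι] [DecidableEq ι] [Fintype α]
    [CommSemiring R] (P : α → Prop) [DecidablePred P] (w : α → R) (F : ℕ → R) :
    ∑ x : ι → α, F #{i | P (x i)} * ∏ i, w (x i) =
      ∑ j ∈ range (Fintype.card ι + 1), (Fintype.card ι).choose j •
        (F j * ((∑ a with P a, w a) ^ j * (∑ a with ¬P a, w a) ^ (Fintype.card ι - j))) := by
  have fiber (S : Finset ι) : ∑ x : ι → α with ({i | P (x i)} : Finset ι) = S, ∏ i, w (x i) =
      (∑ a with P a, w a) ^ #S * (∑ a with ¬P a, w a) ^ (Fintype.card ι - #S) := calc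
    _ = ∑ x : ι → α, ∏ i, (if (i ∈ S ↔ P (x i)) then w (x i) else 0) := by
      rw [sum_filter]
      refine sum_congr rfl fun x _ => ?_
      rw [Fintype.prod_ite_zero]
      simp only [Finset.ext_iff, mem_filter, mem_univ, true_and, iff_comm]
    _ = ∏ i, ∑ a, (if (i ∈ S ↔ P a) then w a else 0) :=
      (Fintype.prod_sum fun i a => if (i ∈ S ↔ P a) then w a else 0).symm
    _ = ∏ i, (if i ∈ S then ∑ a with P a, w a else ∑ a with ¬P a, w a) := by
      refine prod_congr rfl fun i _ => ?_
      by_cases hi : i ∈ S <;> simp [hi, sum_filter]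
    _ = _ := prod_ite_mem_univ S _ _
  calc _ = ∑ S, ∑ x : ι → α with ({i | P (x i)} : Finset ι) = S,
        F #{i | P (x i)} * ∏ i, w (x i) := (sum_fiberwise _ _ _).symm
    _ = ∑ S, F #S * ((∑ a with P a, w a) ^ #S *
        (∑ a with ¬P a, w a) ^ (Fintype.card ι - #S)) := by
      refine sum_congr rfl fun S _ => ?_
      rw [← fiber, mul_sum]
      exact sum_congr rfl fun x hx => by rw [(mem_filter.1 hx).2]
    _ = _ := by
      rw [← powerset_univ, sum_powerset_apply_card (fun j => F j * ((∑ a with P a, w a) ^ j *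
        (∑ a with ¬P a, w a) ^ (Fintype.card ι - j))), card_univ]

theorem sum_ite_le_card_filter_eq_majorityProb {α : Type*} [Fintype α] {k : ℕ} (hk : 1 ≤ k)
    (P : α → Prop) [DecidablePred P] {w : α → ℝ} (hw : ∑ a, w a = 1) :
    ∑ x : Fin (2 * k - 1) → α, (if k ≤ #{i | P (x i)} then ∏ i, w (x i) else 0) =
      majorityProb k (∑ a with P a, w a) := by
  have hr : ∑ a with ¬P a, w a = 1 - ∑ a with P a, w a := by
    rw [← hw, ← sum_filter_add_sum_filter_not univ P]
    ring
  have h := sum_apply_card_filter_mul_prod (ι := Fin (2 * k - 1)) P w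
    fun j => if k ≤ j then 1 else 0
  simp only [boole_mul] at h
  rw [h, Fintype.card_fin, show 2 * k - 1 + 1 = k + k by omega,
    sum_range_add, majorityProb_eq_sum_upper, hr,
    sum_eq_zero fun j hj => by rw [if_neg (by simp only [mem_range] at hj; omega), smul_zero],
    zero_add]
  exact sum_congr rfl fun j _ => by rw [if_pos (by omega), nsmul_eq_mul]

theorem condorcetWinner_of_le_card_filter_eq_zero {n k : ℕ} [NeZero n]
    {prof : Fin (2 * k - 1) → Equiv.Perm (Fin n)} {a : Fin n} (h : k ≤ #{i | prof i a = 0}) :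
    CondorcetWinner k prof a := by
  intro b hb
  refine h.trans (card_le_card fun i hi => ?_)
  simp only [mem_filter, mem_univ, true_and] at hi ⊢
  rw [hi, Fin.pos_iff_ne_zero]
  exact fun h0 => hb ((prof i).injective (h0.trans hi.symm))

theorem eq_of_le_card_filter_eq_zero {ι : Type*} [Fintype ι] [DecidableEq ι] {n k : ℕ} [NeZero n]
    (hι : Fintype.card ι < 2 * k) {prof : ι → Equiv.Perm (Fin n)} {a b : Fin n}
    (ha : k ≤ #{i | prof i a = 0}) (hb : k ≤ #{i | prof i b = 0}) : a = b := by
  by_contra hab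
  have hdisj : Disjoint ({i | prof i a = 0} : Finset ι) ({i | prof i b = 0} : Finset ι) :=
    disjoint_filter.2 fun i _ ha hb => hab ((prof i).injective (ha.trans hb.symm))
  have := card_union_of_disjoint hdisj ▸ card_le_univ (_ ∪ _)
  omega

theorem sum_ite_le_ite_exists_condorcetWinner {n k : ℕ} [NeZero n] (hk : 1 ≤ k)
    (prof : Fin (2 * k - 1) → Equiv.Perm (Fin n)) [Decidable (∃ a, CondorcetWinner k prof a)]
    {P : ℝ} (hP : 0 ≤ P) :
    ∑ a, (if k ≤ #{i | prof i a = 0} then P else 0) ≤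
      if ∃ a, CondorcetWinner k prof a then P else 0 := by
  rw [← sum_filter, sum_const, nsmul_eq_mul]
  split_ifs with hcw
  · refine mul_le_of_le_one_left hP ?_
    exact_mod_cast card_le_one.2 fun a ha b hb =>
      eq_of_le_card_filter_eq_zero (by rw [Fintype.card_fin]; omega) (mem_filter.1 ha).2
        (mem_filter.1 hb).2
  · rw [filter_eq_empty_iff.2 fun a _ ha => hcw ⟨a, condorcetWinner_of_le_card_filter_eq_zero ha⟩]
    simp

noncomputable def firstPlaceProb {n : ℕ} [NeZero n] (π : Equiv.Perm (Fin n) → ℝ) (a : Fin n) :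
    ℝ :=
  ∑ σ with σ a = 0, π σ

theorem firstPlaceProb_mem_stdSimplex {n : ℕ} [NeZero n] {π : Equiv.Perm (Fin n) → ℝ}
    (hπ : π ∈ stdSimplex ℝ (Equiv.Perm (Fin n))) : firstPlaceProb π ∈ stdSimplex ℝ (Fin n) := by
  refine ⟨fun a => sum_nonneg fun σ _ => hπ.1 σ, ?_⟩
  simp only [firstPlaceProb, sum_filter]
  rw [sum_comm]
  simpa [← Equiv.eq_symm_apply] using hπ.2

open Classical in
/-- Any probability distribution `π` on rankings gives a Condorcet winner with probability
at least `n^{-(2k-2)} ∑_{ℓ=0}^{k-1} C(2k-1,ℓ)(n-1)^ℓ`. -/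
theorem condorcet_prob_ge (n k : ℕ) (hn : 1 ≤ n) (hk : 1 ≤ k)
    (π : Equiv.Perm (Fin n) → ℝ) (hπ0 : ∀ σ, 0 ≤ π σ) (hπ1 : ∑ σ, π σ = 1) :
    ((n : ℝ) ^ (2*k-2))⁻¹ * ∑ ℓ ∈ range k, (Nat.choose (2*k-1) ℓ : ℝ) * ((n:ℝ)-1)^ℓ ≤
      ∑ prof : Fin (2*k-1) → Equiv.Perm (Fin n),
        (if ∃ a : Fin n, CondorcetWinner k prof a then ∏ i, π (prof i) else 0) := by
  have : NeZero n := ⟨by omega⟩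
  calc _ = (Fintype.card (Fin n) : ℝ) * majorityProb k (1 / Fintype.card (Fin n)) := by
        rw [Fintype.card_fin, mul_majorityProb_one_div k (by positivity)]
    _ ≤ ∑ a, majorityProb k (firstPlaceProb π a) :=
        (increasesTowardHalf_mul_pow (by positivity) _).card_mul_le_sum_of_mem_stdSimplex
          (hasDerivAt_majorityProb k) (majorityProb_add_majorityProb_one_sub hk)
          (firstPlaceProb_mem_stdSimplex ⟨hπ0, hπ1⟩)
    _ = ∑ a, ∑ prof : Fin (2*k-1) → Equiv.Perm (Fin n),
          (if k ≤ #{i | prof i a = 0} then ∏ i, π (prof i) else 0) := by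
        refine sum_congr rfl fun a _ => ?_
        rw [firstPlaceProb, ← sum_ite_le_card_filter_eq_majorityProb hk _ hπ1]
    _ = ∑ prof : Fin (2*k-1) → Equiv.Perm (Fin n),
          ∑ a, (if k ≤ #{i | prof i a = 0} then ∏ i, π (prof i) else 0) := sum_comm
    _ ≤ _ := sum_le_sum fun prof _ =>
        sum_ite_le_ite_exists_condorcetWinner hk prof (prod_nonneg fun i _ => hπ0 _)
end

section
/- Let n ≥ 1, k ≥ 1, S = {A_1,…,A_n}, and let π* be the probability distribution on rankings of S assigning probability 1/n to each of the n cyclic rankings (A_i, A_{i+1}, …, A_n, A_1, …, A_{i-1}), i = 1,…,n, and 0 to all other rankings. If 2k-1 voters independently sample rankings from π*, the probability that a Condorcet winner exists equals n^{-(2k-2)} · ∑_{ℓ=0}^{k-1} C(2k-1, ℓ)(n-1)^ℓ. -/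
open Finset

/-! With `2k - 1` voters and cyclic rankings, the ranking starting at `A_j` is the only one in
which `A_j` beats its cyclic predecessor, so `A_j` is a Condorcet winner exactly when at least `k`
voters drew that ranking. Two alternatives cannot both be drawn by `k` of the `2k - 1` voters, so
the number of winning profiles is `n` times the number of `v : Fin (2k-1) → Fin n` with fewer
than `k` coordinates different from a fixed `j`, namely `n ∑_{ℓ<k} C(2k-1, ℓ) (n-1)^ℓ`; dividing
by `n^(2k-1)` gives the formula. -/

/-- Position of alternative `j` in the cyclic ranking starting at alternative `i`
(position `0` is the top-ranked alternative). -/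
def cpos (n : ℕ) (i j : Fin n) : ℕ := ((j : ℕ) + n - (i : ℕ)) % n

/-- `A_j` is a Condorcet winner for the profile of cyclic rankings indexed by
`v : Fin (2k-1) → Fin n` (voter `i` uses the cyclic ranking starting at `A_{v i}`). -/
def CondorcetWinnerCyc (n k : ℕ) (v : Fin (2*k-1) → Fin n) (j : Fin n) : Prop :=
  ∀ b : Fin n, b ≠ j → k ≤ (univ.filter (fun i => cpos n (v i) j < cpos n (v i) b)).card

section CyclicPosition

variable {n : ℕ}

lemma cpos_eq_ite (i j : Fin n) :
    cpos n i j = if (i : ℕ) ≤ j then (j : ℕ) - i else j + n - i := by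
  unfold cpos
  split_ifs
  · rw [show (j : ℕ) + n - i = n + (j - i) by omega, Nat.add_mod_left]
    exact Nat.mod_eq_of_lt (by omega)
  · exact Nat.mod_eq_of_lt (by omega)

lemma cpos_self (i : Fin n) : cpos n i i = 0 := by
  simp [cpos_eq_ite]

lemma cpos_pos_of_ne {i j : Fin n} (h : i ≠ j) : 0 < cpos n i j := by
  rw [cpos_eq_ite]
  have : (i : ℕ) ≠ j := Fin.val_ne_of_ne h
  split_ifs <;> omega

lemma exists_ne_forall_cpos_lt_cpos_imp_eq (hn : 2 ≤ n) (j : Fin n) :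
    ∃ b ≠ j, ∀ a, cpos n a j < cpos n a b → a = j := by
  have hj := j.isLt
  -- the predecessor of `j` in the cyclic order
  obtain ⟨b, hb⟩ : ∃ b : Fin n, (b : ℕ) = if (j : ℕ) = 0 then n - 1 else j - 1 :=
    ⟨⟨if (j : ℕ) = 0 then n - 1 else j - 1, by split <;> omega⟩, rfl⟩
  refine ⟨b, ?_, fun a h => ?_⟩
  · rw [Ne, Fin.ext_iff, hb]
    split_ifs <;> omega
  · rw [cpos_eq_ite, cpos_eq_ite] at h
    rw [Fin.ext_iff]
    split_ifs at h hb <;> omega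

lemma condorcetWinnerCyc_iff {k : ℕ} (hn : 1 ≤ n) (v : Fin (2 * k - 1) → Fin n) (j : Fin n) :
    CondorcetWinnerCyc n k v j ↔ k ≤ #{i | v i = j} := by
  constructor
  · intro hwin
    rcases hn.eq_or_lt with rfl | hn2
    · rw [filter_true_of_mem fun i _ => Subsingleton.elim (v i) j, card_univ, Fintype.card_fin]
      omega
    obtain ⟨b, hbj, hb⟩ := exists_ne_forall_cpos_lt_cpos_imp_eq hn2 j
    exact (hwin b hbj).trans (card_le_card fun i => by simpa using hb (v i))
  · intro hk b hbj
    refine hk.trans (card_le_card fun i => ?_)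
    simp only [mem_filter, mem_univ, true_and]
    intro hi
    rw [hi, cpos_self]
    exact cpos_pos_of_ne hbj.symm

end CyclicPosition

section Counting

variable {ι β : Type*} [Fintype ι] [DecidableEq ι] [DecidableEq β]

lemma eq_of_le_card_filter_eq {k : ℕ} (hι : Fintype.card ι < 2 * k) {v : ι → β} {a b : β}
    (ha : k ≤ #{i | v i = a}) (hb : k ≤ #{i | v i = b}) : a = b := by
  by_contra hab
  have hdisj : Disjoint ({i | v i = a} : Finset ι) ({i | v i = b} : Finset ι) :=
    disjoint_filter.mpr fun i _ hia hib => hab (hia.symm.trans hib)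
  have := (card_union_of_disjoint hdisj).symm.trans_le (card_le_univ _)
  omega

variable [Fintype β]

lemma card_filter_filter_ne_eq (b : β) (s : Finset ι) :
    #{v : ι → β | ({i | v i ≠ b} : Finset ι) = s} = (Fintype.card β - 1) ^ #s := by
  have : ({v : ι → β | ({i | v i ≠ b} : Finset ι) = s} : Finset (ι → β))
      = Fintype.piFinset fun i => if i ∈ s then {b}ᶜ else {b} := by
    ext v
    simp only [mem_filter, mem_univ, true_and, Fintype.mem_piFinset, Finset.ext_iff]
    refine forall_congr' fun i => ?_
    split_ifs with h <;> simp [h]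
  rw [this, Fintype.card_piFinset]
  simp only [apply_ite card, card_compl, card_singleton]
  rw [prod_ite_mem, univ_inter, prod_const]

lemma card_filter_card_filter_ne_eq (b : β) (ℓ : ℕ) :
    #{v : ι → β | #{i | v i ≠ b} = ℓ} = (Fintype.card ι).choose ℓ * (Fintype.card β - 1) ^ ℓ := by
  rw [card_eq_sum_card_fiberwise (f := fun v : ι → β => ({i | v i ≠ b} : Finset ι))
    (t := powersetCard ℓ univ) (by intro v hv; simpa using hv)]
  have hfiber : ∀ s ∈ powersetCard ℓ (univ : Finset ι),
      #{v ∈ ({v : ι → β | #{i | v i ≠ b} = ℓ} : Finset _) | ({i | v i ≠ b} : Finset ι) = s}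
        = (Fintype.card β - 1) ^ ℓ := by
    intro s hs
    rw [← (mem_powersetCard.mp hs).2, ← card_filter_filter_ne_eq b s, filter_filter]
    congr 1
    ext v
    simp only [mem_filter, mem_univ, true_and, and_iff_right_iff_imp]
    exact congrArg card
  rw [sum_congr rfl hfiber, sum_const, card_powersetCard, card_univ, smul_eq_mul]

lemma card_filter_card_filter_ne_lt (b : β) (m : ℕ) :
    #{v : ι → β | #{i | v i ≠ b} < m}
      = ∑ ℓ ∈ range m, (Fintype.card ι).choose ℓ * (Fintype.card β - 1) ^ ℓ := by
  rw [card_eq_sum_card_fiberwise (f := fun v : ι → β => #{i | v i ≠ b}) (t := range m)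
    (by intro v hv; simpa using hv)]
  refine sum_congr rfl fun ℓ hℓ => ?_
  rw [← card_filter_card_filter_ne_eq b ℓ, filter_filter]
  congr 1
  ext v
  simp only [mem_filter, mem_univ, true_and, and_iff_right_iff_imp]
  rintro rfl
  exact mem_range.mp hℓ

lemma card_filter_exists_le_card_filter_eq {k : ℕ} (hι : Fintype.card ι + 1 = 2 * k) :
    #{v : ι → β | ∃ b, k ≤ #{i | v i = b}}
      = Fintype.card β * ∑ ℓ ∈ range k, (Fintype.card ι).choose ℓ * (Fintype.card β - 1) ^ ℓ := by
  have hmajority : ∀ (v : ι → β) b, k ≤ #{i | v i = b} ↔ #{i | v i ≠ b} < k := by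
    intro v b
    have := card_filter_add_card_filter_not (s := univ) (fun i => v i = b)
    simp only [← ne_eq, card_univ] at this
    omega
  have : ({v : ι → β | ∃ b, k ≤ #{i | v i = b}} : Finset _)
      = univ.biUnion fun b => {v | #{i | v i ≠ b} < k} := by
    ext v
    simp [hmajority]
  rw [this, card_biUnion, sum_congr rfl fun b _ => card_filter_card_filter_ne_lt b k,
    sum_const, card_univ, smul_eq_mul]
  intro a _ b _ hab
  refine disjoint_filter.mpr fun v _ hva hvb => hab ?_
  exact eq_of_le_card_filter_eq (by omega) ((hmajority v a).mpr hva) ((hmajority v b).mpr hvb)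

end Counting

open Classical in
lemma card_filter_exists_condorcetWinnerCyc {n k : ℕ} (hn : 1 ≤ n) (hk : 1 ≤ k) :
    #{v : Fin (2 * k - 1) → Fin n | ∃ j, CondorcetWinnerCyc n k v j}
      = n * ∑ ℓ ∈ range k, (2 * k - 1).choose ℓ * (n - 1) ^ ℓ := by
  have hcount := card_filter_exists_le_card_filter_eq (β := Fin n)
    (show Fintype.card (Fin (2 * k - 1)) + 1 = 2 * k by simp; omega)
  rw [Fintype.card_fin, Fintype.card_fin] at hcount
  rw [← hcount]
  congr 1
  ext v
  simp only [mem_filter, mem_univ, true_and, condorcetWinnerCyc_iff hn]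

open Classical in
/-- Under the distribution `π*` assigning probability `1/n` to each of the `n` cyclic
rankings, the probability of a Condorcet winner equals
`n^{-(2k-2)} ∑_{ℓ=0}^{k-1} C(2k-1,ℓ)(n-1)^ℓ`. -/
theorem condorcet_prob_cyclic (n k : ℕ) (hn : 1 ≤ n) (hk : 1 ≤ k) :
    (∑ v : Fin (2*k-1) → Fin n,
        (if ∃ j : Fin n, CondorcetWinnerCyc n k v j then ((n : ℝ) ^ (2*k-1))⁻¹ else 0))
      = ((n : ℝ) ^ (2*k-2))⁻¹ * ∑ ℓ ∈ range k, (Nat.choose (2*k-1) ℓ : ℝ) * ((n:ℝ)-1)^ℓ := by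
  rw [sum_ite, sum_const_zero, add_zero, sum_const, nsmul_eq_mul,
    card_filter_exists_condorcetWinnerCyc hn hk]
  push_cast [Nat.cast_sub hn]
  rw [show 2 * k - 1 = 2 * k - 2 + 1 by omega, pow_succ]
  field_simp
end

section
/- Let n ≥ 1, k ≥ 1, and consider the n cyclic rankings τ_i = (A_i, A_{i+1}, …, A_n, A_1, …, A_{i-1}) of alternatives {A_1,…,A_n}. For any choice of 2k-1 rankings σ_1,…,σ_{2k-1}, each equal to some τ_i, alternative A_j is a Condorcet winner if and only if at least k of the rankings σ_1,…,σ_{2k-1} equal τ_j. -/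
open Finset

lemma cpos_eq_zero_iff (n : ℕ) (i b : Fin n) : cpos n i b = 0 ↔ b = i := by
  unfold cpos
  have hb := b.isLt
  have hi := i.isLt
  by_cases hba : (i : ℕ) ≤ (b : ℕ)
  · have h1 : (b : ℕ) + n - (i : ℕ) = ((b : ℕ) - (i : ℕ)) + n := by omega
    rw [h1, Nat.add_mod_right, Nat.mod_eq_of_lt (by omega)]
    constructor
    · intro h; exact Fin.ext (by omega)
    · intro h; simp [h]
  · have h1 : (b : ℕ) + n - (i : ℕ) < n := by omega
    rw [Nat.mod_eq_of_lt h1]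
    constructor
    · intro h; omega
    · intro h; exact absurd (congrArg Fin.val h) (by omega)

lemma cpos_lt_pred (n : ℕ) (hn : 2 ≤ n) (i j : Fin n) :
    haveI : NeZero n := ⟨by omega⟩
    cpos n i j < cpos n i (j - 1) ↔ i = j := by
  haveI : NeZero n := ⟨by omega⟩
  have h1 : ((1 : Fin n) : ℕ) = 1 := by
    rw [Fin.val_one']; exact Nat.mod_eq_of_lt (by omega)
  have hsub : ((j - 1 : Fin n) : ℕ) = ((j : ℕ) + (n - 1)) % n := by
    rw [Fin.sub_def]; simp only [h1]
    rw [Nat.add_comm]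
  unfold cpos
  rw [hsub]
  have hi := i.isLt
  have hj := j.isLt
  have key : (((j : ℕ) + (n - 1)) % n + n - (i : ℕ)) % n
      = (((j : ℕ) + n - (i : ℕ)) % n + (n - 1)) % n := by
    have e1 : ((j : ℕ) + (n - 1)) % n + n - (i : ℕ)
        = ((j : ℕ) + (n - 1)) % n + (n - (i : ℕ)) := by omega
    have e2 : (j : ℕ) + n - (i : ℕ) = (j : ℕ) + (n - (i : ℕ)) := by omega
    rw [e1, e2, Nat.mod_add_mod, Nat.mod_add_mod]
    congr 1; omega
  rw [key]
  have hz : ((j : ℕ) + n - (i : ℕ)) % n = 0 ↔ i = j := by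
    have := cpos_eq_zero_iff n i j
    unfold cpos at this
    rw [this]; exact ⟨fun h => h.symm, fun h => h.symm⟩
  set d := ((j : ℕ) + n - (i : ℕ)) % n with hd
  have hdn : d < n := Nat.mod_lt _ (by omega)
  rcases Nat.eq_zero_or_pos d with h0 | h0
  · rw [h0]
    simp only [Nat.zero_add]
    rw [Nat.mod_eq_of_lt (by omega)]
    constructor
    · intro _; exact hz.mp h0
    · intro _; omega
  · have : d + (n - 1) = (d - 1) + n := by omega
    rw [this, Nat.add_mod_right, Nat.mod_eq_of_lt (by omega)]
    constructor
    · intro h; omega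
    · intro h; exact absurd (hz.mpr h) (by omega)

/-- For a profile of cyclic rankings, `A_j` is a Condorcet winner iff at least `k` of the
`2k-1` voters use the cyclic ranking starting with `A_j`. -/
theorem condorcetCyc_iff (n k : ℕ) (hn : 1 ≤ n) (hk : 1 ≤ k)
    (v : Fin (2*k-1) → Fin n) (j : Fin n) :
    CondorcetWinnerCyc n k v j ↔ k ≤ (univ.filter (fun i => v i = j)).card := by
  constructor
  · intro h
    rcases eq_or_lt_of_le hn with h1 | h2
    · -- n = 1
      have hall : ∀ i, v i = j := by
        intro i
        apply Fin.ext
        have := (v i).isLt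
        have := j.isLt
        omega
      have : (univ.filter (fun i => v i = j)) = (univ : Finset (Fin (2*k-1))) := by
        apply Finset.filter_true_of_mem
        intro i _; exact hall i
      rw [this, Finset.card_univ, Fintype.card_fin]
      omega
    · -- n ≥ 2
      haveI : NeZero n := ⟨by omega⟩
      have hbne : j - 1 ≠ j := by
        intro heq
        rw [sub_eq_self] at heq
        have := congrArg Fin.val heq
        rw [Fin.val_one'] at this
        simp at this
        omega
      refine le_trans (h (j - 1) hbne) (le_of_eq ?_)
      congr 1
      apply Finset.filter_congr
      intro i _
      exact cpos_lt_pred n h2 (v i) j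
  · intro h b hb
    refine le_trans h (Finset.card_le_card ?_)
    intro i hi
    simp only [Finset.mem_filter, Finset.mem_univ, true_and] at hi ⊢
    rw [hi]
    have h0 : cpos n j j = 0 := (cpos_eq_zero_iff n j j).mpr rfl
    have hpos : cpos n j b ≠ 0 := fun hc => hb ((cpos_eq_zero_iff n j b).mp hc)
    omega
end

section
/- For 2k-1 voters with rankings chosen independently and uniformly at random among all n! rankings of n alternatives, the probability that a given fixed alternative A_1 is a Condorcet winner equals ∫_{[0,1]^{2k-1}} (1 - Q(x_1,…,x_{2k-1}))^{n-1} dx_1⋯dx_{2k-1}, where Q(x_1,…,x_{2k-1}) = ∑_{S ⊆ [2k-1], |S| ≥ k} ∏_{i∈S} x_i ∏_{i∉S}(1-x_i). -/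
/-!
Record the ranking of voter `i` only through the set `S_i` of alternatives it ranks below `A_1`;
then `A_1` is a Condorcet winner iff every other alternative lies in at least `k` of the `S_i`.
Exactly `|S_i|! (n-1-|S_i|)!` rankings produce a given `S_i`, which is `n!` times the Beta
integral `∫₀¹ (1-t)^|S_i| t^(n-1-|S_i|) dt`. On the other side, `1 - Q(x)` is the probability
that at least `k` voters rank `A_1` above a fixed alternative, so `(1 - Q(x))^(n-1)` expands as a
sum over the same families `(S_i)` of products of monomials `(1-x_i)^|S_i| x_i^(n-1-|S_i|)`, and
integrating term by term gives the same sum.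
-/

open Finset MeasureTheory Equiv

/-- The probability that `2k-1` i.i.d. uniform points `y i ∈ [0,1]` satisfy `y i < x i`
for at least `k` indices, written as a sum over the subsets `S` of indices `i`
with `y i < x i`. -/
def Qsum (k : ℕ) (x : Fin (2*k-1) → ℝ) : ℝ :=
  ∑ S ∈ (univ : Finset (Fin (2*k-1))).powerset.filter (fun S => k ≤ S.card),
    (∏ i ∈ S, x i) * ∏ i ∈ univ \ S, (1 - x i)

namespace Equiv.Perm

variable {α : Type*} [Fintype α] [DecidableEq α]

theorem card_filter_apply_eq_self (a : α) :
    #{σ : Perm α | σ a = a} = (Fintype.card α - 1).factorial := by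
  have e : Perm {b // b ≠ a} ≃ {σ : Perm α // σ a = a} :=
    (Perm.subtypeEquivSubtypePerm (· ≠ a)).trans (Equiv.subtypeEquivRight (by simp))
  rw [← Fintype.card_subtype, ← Fintype.card_congr e, Fintype.card_perm,
    Fintype.card_subtype_compl, Fintype.card_subtype_eq]

theorem card_filter_apply_eq (a b : α) :
    #{σ : Perm α | σ a = b} = (Fintype.card α - 1).factorial := by
  rw [← card_filter_apply_eq_self a]
  refine card_nbij' (swap a b * ·) (swap a b * ·) ?_ ?_ ?_ ?_ <;> intro σ hσ <;>
    simp_all [← mul_assoc]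

end Equiv.Perm

theorem card_filter_transpose_mem {ι X β : Type*} [Fintype ι] [DecidableEq ι] [Fintype X]
    [Fintype β] [DecidableEq β] (F : X → Finset β) (s : Finset (β → Finset ι)) :
    #{x : ι → X | (fun b => ({i | b ∈ F (x i)} : Finset ι)) ∈ s} =
      ∑ p ∈ s, ∏ i, #{y | F y = ({b | i ∈ p b} : Finset β)} := by
  rw [card_eq_sum_card_fiberwise (f := fun x b => ({i | b ∈ F (x i)} : Finset ι)) (t := s)
    fun x hx => by simpa using hx]
  refine sum_congr rfl fun p hp => ?_
  rw [← Fintype.card_piFinset]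
  congr 1
  ext x
  simp only [mem_filter, mem_univ, true_and, Fintype.mem_piFinset, funext_iff, Finset.ext_iff]
  constructor
  · rintro ⟨-, h⟩ i b
    exact h b i
  · intro h
    have : (fun b => ({i | b ∈ F (x i)} : Finset ι)) = p := by
      ext b i
      simpa using h i b
    exact ⟨this ▸ hp, fun b i => by simp [h i b]⟩

section Ranking

variable {n : ℕ} (z : Fin n)

-- `σ b` is the position of `b` in the ranking `σ`, position `0` being the top.
def rankedBelow (σ : Perm (Fin n)) : Finset {b // b ≠ z} := {b | σ z < σ b}

theorem card_rankedBelow (σ : Perm (Fin n)) : #(rankedBelow z σ) = n - 1 - σ z := by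
  rw [← Fin.card_Ioi]
  refine card_bij (fun b _ => σ b) (by simp [rankedBelow])
    (fun b _ c _ h => Subtype.ext (σ.injective h)) fun w hw => ?_
  refine ⟨⟨σ.symm w, ?_⟩, ?_, by simp⟩
  · intro h
    simp [← h] at hw
  · simpa [rankedBelow] using hw

theorem mem_rankedBelow_mul_ofSubtype (σ : Perm (Fin n)) (τ : Perm {b // b ≠ z})
    (b : {b // b ≠ z}) :
    b ∈ rankedBelow z (σ * Perm.ofSubtype τ) ↔ τ b ∈ rankedBelow z σ := by
  simp [rankedBelow, Perm.ofSubtype_apply_of_not_mem]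

theorem card_filter_rankedBelow_le {S T : Finset {b // b ≠ z}} (h : #S = #T) :
    #{σ | rankedBelow z σ = S} ≤ #{σ | rankedBelow z σ = T} := by
  obtain ⟨τ, rfl⟩ := Perm.exists_map_finset_eq S T h
  refine card_le_card_of_injOn (· * Perm.ofSubtype τ⁻¹) (fun σ hσ => ?_)
    (mul_left_injective _).injOn
  simp only [coe_filter, mem_univ, true_and, Set.mem_ofPred_eq] at hσ ⊢
  ext b
  rw [mem_rankedBelow_mul_ofSubtype, hσ, mem_map_equiv, Perm.inv_def]

theorem card_filter_rankedBelow_congr {S T : Finset {b // b ≠ z}} (h : #S = #T) :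
    #{σ | rankedBelow z σ = S} = #{σ | rankedBelow z σ = T} :=
  (card_filter_rankedBelow_le z h).antisymm (card_filter_rankedBelow_le z h.symm)

theorem card_filter_rankedBelow_eq (S : Finset {b // b ≠ z}) :
    #{σ | rankedBelow z σ = S} = (#S).factorial * (n - 1 - #S).factorial := by
  have hcard : Fintype.card {b // b ≠ z} = n - 1 := by simp
  have hS : #S ≤ n - 1 := hcard ▸ card_le_univ S
  have hn := z.pos
  let v : Fin n := ⟨n - 1 - #S, by omega⟩
  -- The `(n-1)!` rankings placing `z` at `v` are those ranking `#S` alternatives below `z`; they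
  -- fall into `C(n-1, #S)` classes of equal size according to which alternatives these are.
  have hlevel : #{σ : Perm (Fin n) | σ z = v} =
      ∑ T ∈ powersetCard (#S) univ, #{σ | rankedBelow z σ = T} := by
    rw [card_eq_sum_card_fiberwise (f := rankedBelow z) (t := powersetCard (#S) univ)]
    · refine sum_congr rfl fun T hT => ?_
      rw [filter_filter]
      refine congrArg card (filter_congr fun σ _ => and_iff_right_of_imp ?_)
      rintro rfl
      have := card_rankedBelow z σ
      have := (mem_powersetCard.1 hT).2
      exact Fin.ext (by simp [v]; omega)
    · intro σ hσ
      have := card_rankedBelow z σ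
      simp_all [v]
      omega
  rw [sum_congr rfl fun T hT =>
      card_filter_rankedBelow_congr z ((mem_powersetCard.1 hT).2.trans rfl), sum_const,
    card_powersetCard, Perm.card_filter_apply_eq, card_univ, hcard, Fintype.card_fin, smul_eq_mul,
    ← Nat.choose_mul_factorial_mul_factorial hS, mul_assoc] at hlevel
  exact (Nat.eq_of_mul_eq_mul_left (Nat.choose_pos hS) hlevel).symm

theorem card_filter_condorcet_eq_sum_prod (m k : ℕ) :
    #{prof : Fin m → Perm (Fin n) | ∀ b, b ≠ z → k ≤ #{i | prof i z < prof i b}} =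
      ∑ p ∈ Fintype.piFinset fun _ : {b // b ≠ z} =>
          ({T | k ≤ #T} : Finset (Finset (Fin m))),
        ∏ i, (#{b | i ∈ p b}).factorial * (n - 1 - #{b | i ∈ p b}).factorial := by
  have hfilter : (univ.filter fun prof : Fin m → Perm (Fin n) =>
      ∀ b, b ≠ z → k ≤ #{i | prof i z < prof i b}) =
      univ.filter fun prof => (fun b => ({i | b ∈ rankedBelow z (prof i)} : Finset (Fin m))) ∈
        Fintype.piFinset fun _ => ({T | k ≤ #T} : Finset (Finset (Fin m))) := by
    ext prof
    simp [rankedBelow]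
  rw [hfilter, card_filter_transpose_mem]
  simp_rw [card_filter_rankedBelow_eq]

end Ranking

theorem setIntegral_univ_pi_prod {ι : Type*} [Fintype ι] {E : ι → Type*}
    [∀ i, MeasureSpace (E i)] [∀ i, SigmaFinite (volume : Measure (E i))]
    (s : ∀ i, Set (E i)) (f : ∀ i, E i → ℝ) :
    ∫ x in Set.univ.pi s, ∏ i, f i (x i) = ∏ i, ∫ t in s i, f i t := by
  rw [volume_pi, Measure.restrict_pi_pi, integral_fintype_prod_eq_prod]

theorem integral_pow_mul_one_sub_pow (e a : ℕ) :
    ∫ x in (0 : ℝ)..1, x ^ e * (1 - x) ^ a =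
      (e.factorial * a.factorial : ℝ) / (e + a + 1).factorial := by
  have hbeta : Complex.betaIntegral (e + 1) (a + 1) =
      ((∫ x in (0 : ℝ)..1, x ^ e * (1 - x) ^ a : ℝ) : ℂ) := by
    rw [Complex.betaIntegral, ← intervalIntegral.integral_ofReal]
    refine intervalIntegral.integral_congr fun x _ => ?_
    push_cast
    rw [add_sub_cancel_right, add_sub_cancel_right, Complex.cpow_natCast, Complex.cpow_natCast]
  have hgamma := Complex.Gamma_mul_Gamma_eq_betaIntegral (s := e + 1) (t := a + 1)
    (by simp; positivity) (by simp; positivity)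
  rw [hbeta, show (e + 1 : ℂ) + (a + 1) = ((e + a + 1 : ℕ) : ℂ) + 1 by push_cast; ring]
    at hgamma
  simp only [Complex.Gamma_nat_eq_factorial] at hgamma
  rw [← Complex.ofReal_inj]
  push_cast
  rw [eq_div_iff (by exact_mod_cast (e + a + 1).factorial_ne_zero), hgamma, mul_comm]

theorem integral_prod_one_sub_pow_mul_pow {ι : Type*} [Fintype ι] (a c : ι → ℕ) :
    ∫ x in Set.univ.pi fun _ : ι => Set.Icc (0 : ℝ) 1, ∏ i, (1 - x i) ^ a i * x i ^ c i =
      ∏ i, ((a i).factorial * (c i).factorial : ℝ) / (a i + c i + 1).factorial := by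
  rw [setIntegral_univ_pi_prod (fun _ => Set.Icc 0 1) fun i t => (1 - t) ^ a i * t ^ c i]
  refine prod_congr rfl fun i _ => ?_
  rw [integral_Icc_eq_integral_Ioc, ← intervalIntegral.integral_of_le zero_le_one,
    intervalIntegral.integral_congr (g := fun t => t ^ c i * (1 - t) ^ a i)
      fun t _ => mul_comm _ _,
    integral_pow_mul_one_sub_pow, add_comm (c i), mul_comm]

theorem one_sub_Qsum {k : ℕ} (hk : 1 ≤ k) (x : Fin (2 * k - 1) → ℝ) :
    1 - Qsum k x = ∑ T with k ≤ #T, ∏ i, if i ∈ T then 1 - x i else x i := by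
  have htotal : ∑ S, (∏ i ∈ S, x i) * ∏ i ∈ univ \ S, (1 - x i) = 1 := by
    rw [← powerset_univ, ← prod_add]
    simp
  have hsmall :
      1 - Qsum k x = ∑ S with ¬k ≤ #S, (∏ i ∈ S, x i) * ∏ i ∈ univ \ S, (1 - x i) := by
    rw [Qsum, powerset_univ]
    linarith [sum_filter_add_sum_filter_not univ (k ≤ #·)
      fun S => (∏ i ∈ S, x i) * ∏ i ∈ univ \ S, (1 - x i)]
  rw [hsmall]
  -- Among `2k-1` voters, fewer than `k` lie in `S` iff at least `k` lie in its complement.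
  refine sum_nbij' compl compl (fun S hS => ?_) (fun T hT => ?_) (fun S _ => compl_compl S)
    (fun T _ => compl_compl T) fun S _ => ?_
  · simp only [mem_filter, mem_univ, true_and, card_compl, Fintype.card_fin] at hS ⊢
    omega
  · simp only [mem_filter, mem_univ, true_and, card_compl, Fintype.card_fin] at hT ⊢
    omega
  · rw [prod_ite, mul_comm]
    simp [compl_eq_univ_sdiff, sdiff_eq_filter]

theorem one_sub_Qsum_pow {k : ℕ} (hk : 1 ≤ k) (β : Type*) [Fintype β] [DecidableEq β]
    (x : Fin (2 * k - 1) → ℝ) :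
    (1 - Qsum k x) ^ Fintype.card β =
      ∑ p ∈ Fintype.piFinset fun _ : β => ({T | k ≤ #T} : Finset (Finset (Fin (2 * k - 1)))),
        ∏ i, (1 - x i) ^ #{b | i ∈ p b} * x i ^ (Fintype.card β - #{b | i ∈ p b}) := by
  rw [← card_univ, ← prod_const, one_sub_Qsum hk, prod_univ_sum]
  refine sum_congr rfl fun p _ => ?_
  rw [prod_comm]
  refine prod_congr rfl fun i _ => ?_
  rw [prod_ite, prod_const, prod_const,
    ← card_filter_add_card_filter_not (s := univ) (fun b => i ∈ p b), Nat.add_sub_cancel_left]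

theorem integral_one_sub_Qsum_pow {k : ℕ} (hk : 1 ≤ k) (β : Type*) [Fintype β]
    [DecidableEq β] :
    ∫ x in Set.univ.pi fun _ : Fin (2 * k - 1) => Set.Icc (0 : ℝ) 1,
        (1 - Qsum k x) ^ Fintype.card β =
      ∑ p ∈ Fintype.piFinset fun _ : β => ({T | k ≤ #T} : Finset (Finset (Fin (2 * k - 1)))),
        ∏ i, ((#{b | i ∈ p b}).factorial * (Fintype.card β - #{b | i ∈ p b}).factorial : ℝ)
          / (Fintype.card β + 1).factorial := by
  simp_rw [one_sub_Qsum_pow hk β]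
  rw [integral_finsetSum]
  · refine sum_congr rfl fun p _ => ?_
    rw [integral_prod_one_sub_pow_mul_pow]
    refine prod_congr rfl fun i _ => ?_
    rw [Nat.add_sub_cancel' (card_le_univ _)]
  · intro p _
    refine ContinuousOn.integrableOn_compact (isCompact_univ_pi fun _ => isCompact_Icc) ?_
    fun_prop

open Classical in
/-- For `2k-1` independent uniformly random rankings of `n` alternatives, the probability
that the fixed alternative `A_1` (index `0`) is a Condorcet winner equals
`∫_{[0,1]^{2k-1}} (1 - Q(x))^{n-1} dx`. -/
theorem prob_fixed_condorcet_eq_integral (n k : ℕ) (hn : 1 ≤ n) (hk : 1 ≤ k) :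
    ((Nat.factorial n : ℝ) ^ (2*k-1))⁻¹ *
      ((univ : Finset (Fin (2*k-1) → Equiv.Perm (Fin n))).filter
        (fun prof => ∀ b : Fin n, b ≠ ⟨0, by omega⟩ →
          k ≤ (univ.filter (fun i => prof i ⟨0, by omega⟩ < prof i b)).card)).card
    = ∫ x in Set.univ.pi (fun _ : Fin (2*k-1) => Set.Icc (0:ℝ) 1),
        (1 - Qsum k x) ^ (n-1) := by
  have hcard : Fintype.card {b : Fin n // b ≠ ⟨0, by omega⟩} = n - 1 := by simp
  rw [card_filter_condorcet_eq_sum_prod]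
  conv_rhs => rw [← hcard, integral_one_sub_Qsum_pow hk, hcard, Nat.sub_add_cancel hn]
  rw [Nat.cast_sum, mul_sum]
  refine sum_congr rfl fun p _ => ?_
  rw [prod_div_distrib, prod_const, card_univ, Fintype.card_fin, inv_mul_eq_div, Nat.cast_prod]
  simp only [Nat.cast_mul]
end
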